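/- arXiv:2508.09422 — 3 statements merged into one kernel-verified Lean document; each statement's English description precedes it below -/
import Mathlib

section
/- For every finite set S, every probability distribution D on S, and every k ∈ ℕ, the probability that k i.i.d. samples from D contain a collision (two equal samples) is at least the probability that k i.i.d. uniform samples from S contain a collision. -/
open Finset

section Aux

variable {S : Type*} [Fintype S] [DecidableEq S]

/-- The finset of injective tuples. -/
def InjT (S : Type*) [Fintype S] [DecidableEq S] (m : ℕ) : Finset (Fin m → S) :=
  Finset.univ.filter (fun x => Function.Injective x)

/-- Probability that `k` iid samples from `D` are all distinct. -/
noncomputable def FP (D : S → ℝ) (k : ℕ) : ℝ := ∑ x ∈ InjT S k, ∏ i, D (x i)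

lemma image_cons_univ {m : ℕ} (a : S) (y : Fin m → S) :
    Finset.image (Fin.cons a y : Fin (m+1) → S) Finset.univ
      = insert a (Finset.image y Finset.univ) := by
  ext s
  simp only [Finset.mem_image, Finset.mem_insert, Finset.mem_univ, true_and]
  constructor
  · rintro ⟨i, rfl⟩
    induction i using Fin.cases with
    | zero => left; rw [Fin.cons_zero]
    | succ j => right; exact ⟨j, by rw [Fin.cons_succ]⟩
  · rintro (rfl | ⟨j, rfl⟩)
    · exact ⟨0, Fin.cons_zero _ _⟩
    · exact ⟨j.succ, Fin.cons_succ _ _ _⟩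

lemma sum_split {m : ℕ} (g : (Fin (m+1) → S) → ℝ) :
    ∑ x ∈ InjT S (m+1), g x
      = ∑ y ∈ InjT S m, ∑ a ∈ (Finset.image y Finset.univ)ᶜ, g (Fin.cons a y) := by
  rw [Finset.sum_sigma']
  refine Finset.sum_nbij' (i := fun x => ⟨Fin.tail x, x 0⟩)
    (j := fun p => Fin.cons p.2 p.1) ?_ ?_ ?_ ?_ ?_
  · intro x hx
    simp only [InjT, Finset.mem_filter, Finset.mem_univ, true_and] at hx
    have hx' : Function.Injective (Fin.cons (x 0) (Fin.tail x)) := by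
      rwa [Fin.cons_self_tail]
    rw [Fin.cons_injective_iff] at hx'
    simp only [Finset.mem_sigma, InjT, Finset.mem_filter, Finset.mem_univ, true_and,
      Finset.mem_compl, Finset.mem_image, not_exists]
    exact ⟨hx'.2, by simpa [Set.mem_range] using hx'.1⟩
  · intro p hp
    simp only [Finset.mem_sigma, InjT, Finset.mem_filter, Finset.mem_univ, true_and,
      Finset.mem_compl, Finset.mem_image, not_exists] at hp
    simp only [InjT, Finset.mem_filter, Finset.mem_univ, true_and]
    rw [Fin.cons_injective_iff]
    exact ⟨by simpa [Set.mem_range] using hp.2, hp.1⟩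
  · intro x _; exact Fin.cons_self_tail x
  · intro p _; simp
  · intro x _; rw [Fin.cons_self_tail]

lemma sum_perm {m : ℕ} (σ : Equiv.Perm (Fin m)) (g : (Fin m → S) → ℝ) :
    ∑ x ∈ InjT S m, g (x ∘ σ) = ∑ x ∈ InjT S m, g x := by
  refine Finset.sum_nbij' (i := fun x => x ∘ σ) (j := fun x => x ∘ σ.symm) ?_ ?_ ?_ ?_ ?_
  · intro x hx
    simp only [InjT, Finset.mem_filter, Finset.mem_univ, true_and] at hx ⊢
    exact hx.comp σ.injective
  · intro x hx
    simp only [InjT, Finset.mem_filter, Finset.mem_univ, true_and] at hx ⊢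
    exact hx.comp σ.symm.injective
  · intro x _; funext i; simp
  · intro x _; funext i; simp
  · intro x _; rfl

lemma sum_coord (D : S → ℝ) {m : ℕ} (j : Fin (m+1)) :
    ∑ x ∈ InjT S (m+1), D (x j) * ∏ i, D (x i)
      = ∑ x ∈ InjT S (m+1), D (x 0) * ∏ i, D (x i) := by
  rw [← sum_perm (Equiv.swap 0 j) (fun x => D (x 0) * ∏ i, D (x i))]
  refine Finset.sum_congr rfl fun x _ => ?_
  simp only [Function.comp_apply, Function.comp_def]
  rw [Equiv.swap_apply_left]
  congr 1
  exact (Equiv.prod_comp (Equiv.swap 0 j) (fun i => D (x i))).symm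

lemma FP_nonneg (D : S → ℝ) (h0 : ∀ s, 0 ≤ D s) (k : ℕ) : 0 ≤ FP D k :=
  Finset.sum_nonneg fun _ _ => Finset.prod_nonneg fun i _ => h0 _

lemma pairs_bound (f : S → ℝ) (A : Finset S) :
    ∑ a ∈ A, ∑ b ∈ A.erase a, f a * f b
      ≤ ((A.card - 1 : ℕ) : ℝ) * ∑ a ∈ A, f a * f a := by
  have step1 : ∑ a ∈ A, ∑ b ∈ A.erase a, (2 * (f a * f b))
      ≤ ∑ a ∈ A, ∑ b ∈ A.erase a, (f a * f a + f b * f b) := by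
    refine Finset.sum_le_sum fun a _ => Finset.sum_le_sum fun b _ => ?_
    nlinarith [sq_nonneg (f a - f b)]
  have swap : ∑ a ∈ A, ∑ b ∈ A.erase a, f b * f b
      = ∑ b ∈ A, ∑ a ∈ A.erase b, f b * f b := by
    refine Finset.sum_comm' fun a b => ?_
    simp only [Finset.mem_erase]
    constructor
    · rintro ⟨ha, hb, hbA⟩; exact ⟨⟨Ne.symm hb, ha⟩, hbA⟩
    · rintro ⟨⟨hab, haA⟩, hb⟩; exact ⟨haA, Ne.symm hab, hb⟩
  have c1 : ∑ a ∈ A, ∑ _b ∈ A.erase a, f a * f a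
      = ((A.card - 1 : ℕ) : ℝ) * ∑ a ∈ A, f a * f a := by
    rw [Finset.mul_sum]
    refine Finset.sum_congr rfl fun a ha => ?_
    rw [Finset.sum_const, Finset.card_erase_of_mem ha, nsmul_eq_mul]
  have c2 : ∑ a ∈ A, ∑ b ∈ A.erase a, f b * f b
      = ((A.card - 1 : ℕ) : ℝ) * ∑ a ∈ A, f a * f a := by
    rw [swap, Finset.mul_sum]
    refine Finset.sum_congr rfl fun b hb => ?_
    rw [Finset.sum_const, Finset.card_erase_of_mem hb, nsmul_eq_mul]
  have e1 : ∑ a ∈ A, ∑ b ∈ A.erase a, (f a * f a + f b * f b)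
      = 2 * (((A.card - 1 : ℕ) : ℝ) * ∑ a ∈ A, f a * f a) := by
    simp only [Finset.sum_add_distrib]
    rw [c1, c2]; ring
  have e2 : ∑ a ∈ A, ∑ b ∈ A.erase a, (2 * (f a * f b))
      = 2 * ∑ a ∈ A, ∑ b ∈ A.erase a, f a * f b := by
    simp only [Finset.mul_sum]
  rw [e2, e1] at step1
  linarith

lemma key_bound (D : S → ℝ) (h0 : ∀ s, 0 ≤ D s) (m : ℕ) :
    FP D (m+2) ≤ ((Fintype.card S - (m+1) : ℕ) : ℝ) *
      ∑ z ∈ InjT S (m+1), D (z 0) * ∏ i, D (z i) := by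
  have hcard : ∀ y : Fin m → S, y ∈ InjT S m →
      ((Finset.image y Finset.univ)ᶜ : Finset S).card = Fintype.card S - m := by
    intro y hy
    simp only [InjT, Finset.mem_filter, Finset.mem_univ, true_and] at hy
    rw [Finset.card_compl, Finset.card_image_of_injective _ hy, Finset.card_univ,
      Fintype.card_fin]
  have hT : ∑ z ∈ InjT S (m+1), D (z 0) * ∏ i, D (z i)
      = ∑ y ∈ InjT S m, ∑ a ∈ (Finset.image y Finset.univ)ᶜ,
          D a * D a * ∏ i, D (y i) := by
    rw [sum_split (fun z => D (z 0) * ∏ i, D (z i))]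
    refine Finset.sum_congr rfl fun y _ => Finset.sum_congr rfl fun a _ => ?_
    rw [Fin.prod_univ_succ]
    simp only [Fin.cons_zero, Fin.cons_succ]
    ring
  have hF : FP D (m+2) = ∑ y ∈ InjT S m, ∑ a ∈ (Finset.image y Finset.univ)ᶜ,
      ∑ b ∈ ((Finset.image y Finset.univ)ᶜ).erase a, D a * D b * ∏ i, D (y i) := by
    show ∑ x ∈ InjT S (m+2), ∏ i, D (x i) = _
    rw [sum_split (fun x => ∏ i, D (x i))]
    have : ∀ z ∈ InjT S (m+1), ∑ b ∈ (Finset.image z Finset.univ)ᶜ,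
        ∏ i, D ((Fin.cons b z : Fin (m+2) → S) i)
        = ∑ b ∈ (Finset.image z Finset.univ)ᶜ, D b * ∏ i, D (z i) := by
      intro z _
      refine Finset.sum_congr rfl fun b _ => ?_
      rw [Fin.prod_univ_succ]
      simp only [Fin.cons_zero, Fin.cons_succ]
    rw [Finset.sum_congr rfl this,
      sum_split (fun z => ∑ b ∈ (Finset.image z Finset.univ)ᶜ, D b * ∏ i, D (z i))]
    refine Finset.sum_congr rfl fun y _ => Finset.sum_congr rfl fun a _ => ?_
    rw [image_cons_univ, Finset.compl_insert]
    refine Finset.sum_congr rfl fun b _ => ?_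
    rw [Fin.prod_univ_succ]
    simp only [Fin.cons_zero, Fin.cons_succ]
    ring
  rw [hF, hT, Finset.mul_sum]
  refine Finset.sum_le_sum fun y hy => ?_
  set A := (Finset.image y Finset.univ)ᶜ with hA
  have hP : 0 ≤ ∏ i, D (y i) := Finset.prod_nonneg fun i _ => h0 _
  have hrw : ∑ a ∈ A, ∑ b ∈ A.erase a, D a * D b * ∏ i, D (y i)
      = (∑ a ∈ A, ∑ b ∈ A.erase a, D a * D b) * ∏ i, D (y i) := by
    rw [Finset.sum_mul]
    exact Finset.sum_congr rfl fun a _ => by rw [Finset.sum_mul]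
  have hrw2 : ∑ a ∈ A, D a * D a * ∏ i, D (y i)
      = (∑ a ∈ A, D a * D a) * ∏ i, D (y i) := by rw [Finset.sum_mul]
  rw [hrw, hrw2, ← mul_assoc]
  refine mul_le_mul_of_nonneg_right ?_ hP
  have := pairs_bound D A
  have hAc : (A.card - 1 : ℕ) = Fintype.card S - (m+1) := by
    rw [hcard y hy, Nat.sub_sub]
  rwa [hAc] at this

lemma InjT_empty_of_lt {k : ℕ} (h : Fintype.card S < k) : InjT S k = ∅ := by
  refine Finset.filter_eq_empty_iff.mpr fun x _ hx => ?_
  have := Fintype.card_le_of_injective x hx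
  rw [Fintype.card_fin] at this
  omega

lemma FP_one (D : S → ℝ) (h1 : ∑ s, D s = 1) : FP D 1 = 1 := by
  have huniv : InjT S 1 = Finset.univ := by
    refine Finset.filter_true_of_mem fun x _ => ?_
    exact Function.injective_of_subsingleton x
  rw [FP, huniv, ← Fintype.sum_pow D 1, h1, one_pow]

lemma FP_zero (D : S → ℝ) : FP D 0 = 1 := by
  have huniv : InjT S 0 = Finset.univ := by
    refine Finset.filter_true_of_mem fun x _ => ?_
    exact Function.injective_of_subsingleton x
  rw [FP, huniv]
  simp

lemma step_ineq (D : S → ℝ) (h0 : ∀ s, 0 ≤ D s) (h1 : ∑ s, D s = 1) (k : ℕ) :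
    (Fintype.card S : ℝ) * FP D (k+1) ≤ ((Fintype.card S - k : ℕ) : ℝ) * FP D k := by
  cases k with
  | zero => rw [FP_one D h1, FP_zero D]; simp
  | succ m =>
    by_cases hn : m + 1 + 1 ≤ Fintype.card S
    · -- the main case
      set n := Fintype.card S with hn'
      set T := ∑ z ∈ InjT S (m+1), D (z 0) * ∏ i, D (z i) with hTdef
      have hTnn : 0 ≤ T := Finset.sum_nonneg fun z _ =>
        mul_nonneg (h0 _) (Finset.prod_nonneg fun i _ => h0 _)
      have hkey := key_bound D h0 m
      have hsplit : FP D (m+1) = FP D (m+2) + (m+1) * T := by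
        have e1 : FP D (m+1) = ∑ z ∈ InjT S (m+1), (∑ s, D s) * ∏ i, D (z i) := by
          rw [h1, FP]
          simp
        have e2 : ∀ z ∈ InjT S (m+1), (∑ s, D s) * ∏ i, D (z i)
            = (∑ a ∈ (Finset.image z Finset.univ)ᶜ, D a) * ∏ i, D (z i)
              + (∑ j, D (z j)) * ∏ i, D (z i) := by
          intro z hz
          simp only [InjT, Finset.mem_filter, Finset.mem_univ, true_and] at hz
          rw [← add_mul]
          congr 1
          have him : ∑ s ∈ Finset.image z Finset.univ, D s = ∑ j, D (z j) :=
            Finset.sum_image (fun x _ y _ h => hz h)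
          rw [← him, add_comm (∑ a ∈ (Finset.image z Finset.univ)ᶜ, D a)]
          exact (Finset.sum_add_sum_compl _ _).symm
        rw [e1, Finset.sum_congr rfl e2, Finset.sum_add_distrib]
        congr 1
        · show _ = ∑ x ∈ InjT S (m+2), ∏ i, D (x i)
          rw [sum_split (fun x => ∏ i, D (x i))]
          refine Finset.sum_congr rfl fun z _ => ?_
          rw [Finset.sum_mul]
          refine Finset.sum_congr rfl fun a _ => ?_
          conv_rhs => rw [Fin.prod_univ_succ]
          simp only [Fin.cons_zero, Fin.cons_succ]
        · have e3 : ∀ z ∈ InjT S (m+1), (∑ j, D (z j)) * ∏ i, D (z i)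
              = ∑ j, D (z j) * ∏ i, D (z i) := fun z _ => Finset.sum_mul _ _ _
          rw [Finset.sum_congr rfl e3, Finset.sum_comm]
          have e4 : ∀ j : Fin (m+1), ∑ z ∈ InjT S (m+1), D (z j) * ∏ i, D (z i) = T :=
            fun j => sum_coord D j
          rw [Finset.sum_congr rfl (fun j _ => e4 j), Finset.sum_const, Finset.card_univ,
            Fintype.card_fin, nsmul_eq_mul]
          push_cast
          ring
      have hc : ((n - (m+1) : ℕ) : ℝ) = (n : ℝ) - (m+1) := by
        have : m + 1 ≤ n := by omega
        push_cast [Nat.cast_sub this]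
        ring
      rw [hc] at hkey ⊢
      have hF2 : 0 ≤ FP D (m+2) := FP_nonneg D h0 _
      have hmul := mul_le_mul_of_nonneg_left hkey
        (show (0:ℝ) ≤ (m+1 : ℝ) by positivity)
      rw [hsplit]
      nlinarith [hmul, hTnn, hF2]
    · have e1 : InjT S (m+2) = ∅ := InjT_empty_of_lt (by omega)
      have e2 : InjT S (m+1+1) = ∅ := e1
      have : FP D (m+2) = 0 := by rw [FP, e1, Finset.sum_empty]
      rw [this, mul_zero]
      have hnk : (Fintype.card S - (m+1) : ℕ) = 0 := by omega
      rw [hnk]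
      simp

lemma FP_le_uniform [Nonempty S] (D : S → ℝ) (h0 : ∀ s, 0 ≤ D s) (h1 : ∑ s, D s = 1) :
    ∀ k, FP D k ≤ ((Fintype.card S).descFactorial k : ℝ) / (Fintype.card S : ℝ) ^ k := by
  intro k
  induction k with
  | zero => rw [FP_zero]; simp
  | succ k ih =>
    have hn : (0:ℝ) < (Fintype.card S : ℝ) := by
      exact_mod_cast Fintype.card_pos
    have hstep := step_ineq D h0 h1 k
    have h2 : ((Fintype.card S - k : ℕ) : ℝ) * FP D k
        ≤ ((Fintype.card S - k : ℕ) : ℝ)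
          * (((Fintype.card S).descFactorial k : ℝ) / (Fintype.card S : ℝ) ^ k) :=
      mul_le_mul_of_nonneg_left ih (by positivity)
    have h3 : (Fintype.card S : ℝ) * FP D (k+1)
        ≤ ((Fintype.card S - k : ℕ) : ℝ)
          * (((Fintype.card S).descFactorial k : ℝ) / (Fintype.card S : ℝ) ^ k) :=
      le_trans hstep h2
    have heq : ((Fintype.card S).descFactorial (k+1) : ℝ) / (Fintype.card S : ℝ) ^ (k+1)
        = (((Fintype.card S - k : ℕ) : ℝ)
          * (((Fintype.card S).descFactorial k : ℝ) / (Fintype.card S : ℝ) ^ k))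
          / (Fintype.card S : ℝ) := by
      rw [Nat.descFactorial_succ, Nat.cast_mul, pow_succ]
      field_simp
    rw [heq, le_div_iff₀ hn]
    linarith [h3]

end Aux

/-- Collision probability of i.i.d. samples from any distribution `D` on a finite set `S`
is at least the collision probability for the uniform distribution on `S`. -/
theorem stmt_2 {S : Type*} [Fintype S] [DecidableEq S] [Nonempty S]
    (D : S → ℝ) (hD0 : ∀ s, 0 ≤ D s) (hD1 : ∑ s, D s = 1) (k : ℕ) :
    ∑ x ∈ Finset.univ.filter (fun x : Fin k → S => ¬ Function.Injective x),
        ∏ i, D (x i)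
      ≥ ∑ _x ∈ Finset.univ.filter (fun x : Fin k → S => ¬ Function.Injective x),
        ∏ _i : Fin k, (1 / (Fintype.card S : ℝ)) := by
  set n := Fintype.card S with hn
  have hn0 : (0:ℝ) < (n:ℝ) := by exact_mod_cast Fintype.card_pos
  -- total sums are 1
  have hTotD : ∑ x : Fin k → S, ∏ i, D (x i) = 1 := by
    rw [← Fintype.sum_pow D k, hD1, one_pow]
  have hTotU : ∑ _x : Fin k → S, ∏ _i : Fin k, (1 / (n : ℝ)) = 1 := by
    rw [Finset.sum_const, Finset.prod_const, Finset.card_univ, Finset.card_univ,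
      Fintype.card_fun, Fintype.card_fin, nsmul_eq_mul]
    push_cast
    rw [one_div, inv_pow, mul_inv_cancel₀ (pow_ne_zero _ (ne_of_gt hn0))]
  -- split into injective / non-injective parts
  have hsplitD := Finset.sum_filter_add_sum_filter_not Finset.univ
    (fun x : Fin k → S => Function.Injective x) (fun x => ∏ i, D (x i))
  have hsplitU := Finset.sum_filter_add_sum_filter_not Finset.univ
    (fun x : Fin k → S => Function.Injective x) (fun _x => ∏ _i : Fin k, (1 / (n : ℝ)))
  -- the injective part comparison
  have hcard : (InjT S k).card = n.descFactorial k := by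
    have h1 : (InjT S k).card = Fintype.card {x : Fin k → S // Function.Injective x} :=
      (Fintype.card_subtype _).symm
    rw [h1, Fintype.card_congr (Equiv.subtypeInjectiveEquivEmbedding (Fin k) S),
      Fintype.card_embedding_eq, Fintype.card_fin]
  have hUinj : ∑ _x ∈ InjT S k, ∏ _i : Fin k, (1 / (n : ℝ))
      = (n.descFactorial k : ℝ) / (n : ℝ) ^ k := by
    rw [Finset.sum_const, hcard, Finset.prod_const, Finset.card_univ, Fintype.card_fin,
      nsmul_eq_mul, div_pow, one_pow]
    ring
  have hDinj : FP D k ≤ (n.descFactorial k : ℝ) / (n : ℝ) ^ k :=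
    FP_le_uniform D hD0 hD1 k
  have hID : ∑ x ∈ Finset.univ.filter (fun x : Fin k → S => Function.Injective x),
      ∏ i, D (x i) = FP D k := rfl
  have hIU : ∑ _x ∈ Finset.univ.filter (fun x : Fin k → S => Function.Injective x),
      ∏ _i : Fin k, (1 / (n : ℝ)) = (n.descFactorial k : ℝ) / (n : ℝ) ^ k := hUinj
  rw [hID, hTotD] at hsplitD
  rw [hIU, hTotU] at hsplitU
  linarith [hDinj, hsplitD, hsplitU]
end

section
/- Let H be a k-uniform hypergraph (k even) and ℓ ≥ k/2. In the level-ℓ Kikuchi graph (vertices are size-ℓ subsets of V, with w₁ ~ w₂ iff w₁ △ w₂ ∈ H, and edge {w₁,w₂} colored by the hyperedge w₁ △ w₂), for any closed walk W = (w₀, w₁, …, w_T = w₀), the set of colors appearing an odd number of times along W forms an even cover of H: the symmetric difference of those hyperedges is empty. -/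
open Finset

instance symmDiffCommFinset {α : Type*} [DecidableEq α] :
    Std.Commutative (α := Finset α) symmDiff := ⟨fun a b => symmDiff_comm a b⟩

instance symmDiffAssocFinset {α : Type*} [DecidableEq α] :
    Std.Associative (α := Finset α) symmDiff := ⟨fun a b c => symmDiff_assoc a b c⟩

/-!
Identify a finite set with its indicator vector over `𝔽₂`, so that `∆` becomes addition.
Adding up the colours of all steps of the walk counts each colour with its multiplicity, which
modulo 2 leaves exactly the colours occurring an odd number of times. On the other hand each
colour is `w t + w (t + 1)`, so the sum telescopes to `w 0 + w T = 0` for a closed walk.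
-/

section Mod2Indicator

variable {V : Type*} [DecidableEq V]

def mod2Indicator (s : Finset V) : V → ZMod 2 := fun v => if v ∈ s then 1 else 0

lemma mod2Indicator_symmDiff (a b : Finset V) :
    mod2Indicator (symmDiff a b) = mod2Indicator a + mod2Indicator b := by
  funext v
  by_cases ha : v ∈ a <;> by_cases hb : v ∈ b <;>
    simp [mod2Indicator, mem_symmDiff, ha, hb, ZModModule.add_self]

lemma mod2Indicator_eq_zero_iff (s : Finset V) : mod2Indicator s = 0 ↔ s = ∅ := by
  refine ⟨fun h => eq_empty_of_forall_notMem fun v hv => ?_, ?_⟩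
  · simpa [mod2Indicator, hv] using congrFun h v
  · rintro rfl
    funext v
    simp [mod2Indicator]

lemma mod2Indicator_fold_symmDiff (s : Finset (Finset V)) :
    mod2Indicator (s.fold symmDiff ∅ id) = ∑ C ∈ s, mod2Indicator C := by
  induction s using Finset.induction_on with
  | empty => funext v; simp [mod2Indicator]
  | insert C s hC ih => rw [fold_insert hC, sum_insert hC, id_eq, mod2Indicator_symmDiff, ih]

end Mod2Indicator

section ZModTwoModule

variable {M : Type*} [AddCommGroup M] [Module (ZMod 2) M]

lemma nsmul_eq_ite_odd (n : ℕ) (x : M) : n • x = if Odd n then x else 0 := by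
  rw [← Nat.cast_smul_eq_nsmul (ZMod 2)]
  split_ifs with hn
  · rw [hn.natCast_zmod_two, one_smul]
  · rw [(Nat.not_odd_iff_even.mp hn).natCast_zmod_two, zero_smul]

lemma sum_comp_eq_sum_filter_odd {ι α : Type*} [DecidableEq α] (s : Finset ι) (H : Finset α)
    (g : ι → α) (hg : ∀ i ∈ s, g i ∈ H) (f : α → M) :
    ∑ i ∈ s, f (g i) = ∑ C ∈ H with Odd #{i ∈ s | g i = C}, f C := by
  rw [sum_filter, ← sum_fiberwise_of_maps_to hg]
  refine sum_congr rfl fun C _ => ?_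
  rw [sum_congr rfl fun i hi => congrArg f (mem_filter.mp hi).2, sum_const, nsmul_eq_ite_odd]

lemma Fin.sum_castSucc_add_succ {T : ℕ} (f : Fin (T + 1) → M) :
    ∑ t : Fin T, (f t.castSucc + f t.succ) = f 0 + f (Fin.last T) := by
  simp only [← ZModModule.sub_eq_add, sum_sub_distrib]
  rw [sub_eq_sub_iff_add_eq_add, ← Fin.sum_univ_castSucc, ← Fin.sum_univ_succ]

end ZModTwoModule

theorem stmt_5_general {V : Type*} [DecidableEq V] (T : ℕ)
    (H : Finset (Finset V))
    (w : Fin (T + 1) → Finset V)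
    (hstep : ∀ t : Fin T, symmDiff (w t.castSucc) (w t.succ) ∈ H)
    (hclosed : w (Fin.last T) = w 0) :
    Finset.fold symmDiff (∅ : Finset V) id
      (H.filter (fun C => Odd ((Finset.univ.filter
        (fun t : Fin T => symmDiff (w t.castSucc) (w t.succ) = C)).card))) = ∅ := by
  rw [← mod2Indicator_eq_zero_iff, mod2Indicator_fold_symmDiff,
    ← sum_comp_eq_sum_filter_odd univ H _ fun t _ => hstep t]
  simp only [mod2Indicator_symmDiff]
  rw [Fin.sum_castSucc_add_succ (fun t => mod2Indicator (w t)), hclosed, ZModModule.add_self]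

/-- For a closed walk `w₀, …, w_T = w₀` in the level-`ℓ` Kikuchi graph of a `k`-uniform
hypergraph `H` (vertices: size-`ℓ` subsets; steps colored by the hyperedge
`w_t ∆ w_{t+1} ∈ H`), the set of colors appearing an odd number of times along the walk
has empty iterated symmetric difference, i.e. it is an even cover of `H`. -/
theorem stmt_5 {V : Type*} [DecidableEq V] (k ℓ T : ℕ) (hk : Even k) (hkl : k / 2 ≤ ℓ)
    (H : Finset (Finset V)) (hH : ∀ e ∈ H, e.card = k)
    (w : Fin (T + 1) → Finset V) (hw : ∀ t, (w t).card = ℓ)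
    (hstep : ∀ t : Fin T, symmDiff (w t.castSucc) (w t.succ) ∈ H)
    (hclosed : w (Fin.last T) = w 0) :
    Finset.fold symmDiff (∅ : Finset V) id
      (H.filter (fun C => Odd ((Finset.univ.filter
        (fun t : Fin T => symmDiff (w t.castSucc) (w t.succ) = C)).card))) = ∅ :=
  stmt_5_general T H w hstep hclosed
end

section
/- Let P be a sum of μ distinct multilinear monomials in variables x₁,…,x_m, each of degree at most T, with T dividing m. For a uniformly random equipartition π of [m] into T parts, let P_π be the sum of those monomials of P whose variable index sets are shattered by π. Then with probability at least exp(−2T), the number of monomials in P_π is at least 0.5·μ·exp(−T). -/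
/-!
Write `m = T s`, and call an equipartition `f` good for a monomial `C` (of degree `k ≤ T`) if
it is injective on `C`. Count the pairs `(f, ψ)` of an equipartition `f` and a map
`ψ : C → [m]` with `f ∘ ψ` injective in two ways: for fixed `f` one picks `k` distinct parts
and one of their `s` elements each, giving `(T)_k s^k`; for fixed injective `ψ` the count does
not depend on `ψ`, by permuting `[m]`. Hence the fraction of equipartitions good for `C` is
`(T)_k s^k / (m)_k ≥ T! / T^T ≥ e^{-T}`. So the number `X` of shattered monomials has mean at
least `e^{-T} μ`; as `X ≤ μ`, it is at least `e^{-T} μ / 2` with probability at least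
`e^{-T} / 2 ≥ e^{-2T}`.
-/

open Finset Function Nat

theorem factorial_mul_descFactorial_le (T s k : ℕ) (hk : k ≤ T) :
    T ! * (T * s).descFactorial k ≤ T.descFactorial k * s ^ k * T ^ T := by
  calc T ! * (T * s).descFactorial k
      = T.descFactorial k * (T - k)! * (T * s).descFactorial k := by
        rw [← Nat.factorial_mul_descFactorial hk]; ring
    _ ≤ T.descFactorial k * T ^ (T - k) * (T * s) ^ k := by
        gcongr
        · exact (Nat.factorial_le_pow _).trans (Nat.pow_le_pow_left (Nat.sub_le T k) _)
        · exact Nat.descFactorial_le_pow _ _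
    _ = T.descFactorial k * s ^ k * T ^ T := by
        rw [mul_pow, ← pow_sub_mul_pow T hk]; ring

theorem exp_neg_mul_descFactorial_le {T k : ℕ} (s : ℕ) (hk : k ≤ T) :
    Real.exp (-T) * (T * s).descFactorial k ≤ T.descFactorial k * s ^ k := by
  have hfac : (0 : ℝ) < T ! := by positivity
  have key : (T ! : ℝ) * (T * s).descFactorial k ≤ T.descFactorial k * s ^ k * T ^ T := by
    exact_mod_cast factorial_mul_descFactorial_le T s k hk
  rw [Real.exp_neg, inv_mul_le_iff₀ (Real.exp_pos _)]
  calc ((T * s).descFactorial k : ℝ) ≤ T ^ T / T ! * (T.descFactorial k * s ^ k) := by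
        rw [div_mul_eq_mul_div, le_div_iff₀ hfac]; linarith
    _ ≤ Real.exp T * (T.descFactorial k * s ^ k) := by
        gcongr; exact Real.pow_div_factorial_le_exp _ (Nat.cast_nonneg _) T

section Equipartition

variable {α β γ : Type*} [Fintype α] [DecidableEq β]

theorem card_filter_comp_equiv {α' : Type*} [Fintype α'] (e : α ≃ α') (g : α' → β)
    (b : β) : #{a | g (e a) = b} = #{a' | g a' = b} :=
  card_equiv e (by simp)

theorem card_filter_fst_eq [Fintype β] (s : ℕ) (b : β) : #{p : β × Fin s | p.1 = b} = s := by
  have : ({p | p.1 = b} : Finset (β × Fin s)) = {b} ×ˢ univ := by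
    ext ⟨b', i⟩
    simp [eq_comm]
  simp [this]

theorem card_filter_comp_eq_prod [Fintype γ] [DecidableEq γ] (f : α → β) (χ : γ → β) :
    #{ψ : γ → α | f ∘ ψ = χ} = ∏ c, #{a | f a = χ c} := by
  rw [← Fintype.card_piFinset]
  congr 1
  ext ψ
  simp [funext_iff]

variable [DecidableEq α] [Fintype β]

variable (α β) in
def equipartitions (s : ℕ) : Finset (α → β) :=
  {f | ∀ b, #{a | f a = b} = s}

theorem equipartitions_nonempty {s : ℕ} (h : Fintype.card α = Fintype.card β * s) :
    (equipartitions α β s).Nonempty := by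
  obtain e : α ≃ β × Fin s := Fintype.equivOfCardEq (by simp [h])
  exact ⟨fun a => (e a).1,
    by simp [equipartitions, card_filter_comp_equiv e Prod.fst, card_filter_fst_eq]⟩

@[simp]
theorem comp_perm_mem_equipartitions_iff {s : ℕ} {f : α → β} (τ : Equiv.Perm α) :
    f ∘ τ ∈ equipartitions α β s ↔ f ∈ equipartitions α β s := by
  simp [equipartitions, card_filter_comp_equiv τ f]

variable [Fintype γ]

theorem card_filter_injective_comp_eq {s : ℕ} {ψ ψ' : γ → α} (hψ : Injective ψ)
    (hψ' : Injective ψ') :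
    #{f ∈ equipartitions α β s | Injective (f ∘ ψ)}
      = #{f ∈ equipartitions α β s | Injective (f ∘ ψ')} := by
  obtain ⟨τ, hτ⟩ := Equiv.Perm.exists_extending_pair ψ ψ' hψ hψ'
  refine card_equiv (τ.arrowCongr (Equiv.refl β)) fun f => ?_
  have hcomp : f ∘ τ.symm ∘ ψ' = f ∘ ψ := by
    ext c
    simp [← hτ c]
  change _ ↔ f ∘ τ.symm ∈ _
  simp only [mem_filter, comp_assoc, hcomp, comp_perm_mem_equipartitions_iff]

variable [DecidableEq γ]

variable (α γ) in
theorem card_filter_injective :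
    #{ψ : γ → α | Injective ψ} = (Fintype.card α).descFactorial (Fintype.card γ) := by
  rw [← Fintype.card_subtype, Fintype.card_congr (Equiv.subtypeInjectiveEquivEmbedding γ α)]
  exact Fintype.card_embedding_eq

theorem card_filter_injective_comp {s : ℕ} {f : α → β} (hf : f ∈ equipartitions α β s) :
    #{ψ : γ → α | Injective (f ∘ ψ)}
      = (Fintype.card β).descFactorial (Fintype.card γ) * s ^ Fintype.card γ := by
  rw [card_eq_sum_card_fiberwise (f := (f ∘ ·)) (t := {χ : γ → β | Injective χ})
      (fun ψ hψ => by simpa using hψ),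
    ← card_filter_injective β γ, card_eq_sum_ones, sum_mul, one_mul]
  refine sum_congr rfl fun χ hχ => ?_
  rw [filter_filter]
  trans #{ψ : γ → α | f ∘ ψ = χ}
  · exact congrArg card
      (filter_congr fun ψ _ => and_iff_right_of_imp fun h => h ▸ (mem_filter.1 hχ).2)
  rw [card_filter_comp_eq_prod]
  simp_all [equipartitions]

theorem card_filter_injective_comp_mul_descFactorial {s : ℕ} {ψ₀ : γ → α}
    (hψ₀ : Injective ψ₀) :
    #{f ∈ equipartitions α β s | Injective (f ∘ ψ₀)}
        * (Fintype.card α).descFactorial (Fintype.card γ)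
      = #(equipartitions α β s)
        * ((Fintype.card β).descFactorial (Fintype.card γ) * s ^ Fintype.card γ) := by
  rw [← card_filter_injective α γ, mul_comm]
  refine (card_mul_eq_card_mul (fun f (ψ : γ → α) => Injective (f ∘ ψ)) (fun f hf => ?_)
    (fun ψ hψ => card_filter_injective_comp_eq (mem_filter.1 hψ).2 hψ₀)).symm
  rw [bipartiteAbove, filter_filter, ← card_filter_injective_comp hf]
  exact congrArg card (filter_congr fun ψ _ => and_iff_right_of_imp Injective.of_comp)

theorem exp_neg_mul_card_equipartitions_le {s : ℕ} {ψ : γ → α} (hψ : Injective ψ)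
    (hγ : Fintype.card γ ≤ Fintype.card β) (hα : Fintype.card α = Fintype.card β * s) :
    Real.exp (-Fintype.card β) * #(equipartitions α β s)
      ≤ #{f ∈ equipartitions α β s | Injective (f ∘ ψ)} := by
  have hcount := card_filter_injective_comp_mul_descFactorial (β := β) (s := s) hψ
  have hpos : (0 : ℝ) < (Fintype.card α).descFactorial (Fintype.card γ) := by
    exact_mod_cast descFactorial_pos.2 (Fintype.card_le_of_injective ψ hψ)
  refine le_of_mul_le_mul_right ?_ hpos
  calc Real.exp (-Fintype.card β) * #(equipartitions α β s)
        * ((Fintype.card α).descFactorial (Fintype.card γ) : ℝ)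
      = #(equipartitions α β s) * (Real.exp (-Fintype.card β)
        * ((Fintype.card β * s).descFactorial (Fintype.card γ) : ℕ)) := by rw [hα]; ring
    _ ≤ #(equipartitions α β s)
        * ((Fintype.card β).descFactorial (Fintype.card γ) * s ^ Fintype.card γ : ℕ) := by
        gcongr
        exact_mod_cast exp_neg_mul_descFactorial_le s hγ
    _ = _ := by exact_mod_cast hcount.symm

end Equipartition

theorem mul_card_le_card_filter_of_le_sum {ι : Type*} {s : Finset ι} {X : ι → ℝ}
    {M p c : ℝ} (hM : 0 < M) (hc : 0 ≤ c) (hp : 0 ≤ p) (hX : ∀ i ∈ s, X i ≤ M)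
    (hsum : p * M * #s ≤ ∑ i ∈ s, X i) :
    (1 - c) * p * #s ≤ #{i ∈ s | c * M * p ≤ X i} := by
  set F := {i ∈ s | c * M * p ≤ X i}
  have hF : ∑ i ∈ F, X i ≤ #F * M := by
    simpa using sum_le_card_nsmul F X M fun i hi => hX i (mem_filter.1 hi).1
  have hnotF : ∑ i ∈ s with ¬ c * M * p ≤ X i, X i ≤ #s * (c * M * p) := by
    calc _ ≤ #{i ∈ s | ¬ c * M * p ≤ X i} * (c * M * p) := by
          simpa using sum_le_card_nsmul _ X _ fun i hi => (not_le.1 (mem_filter.1 hi).2).le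
      _ ≤ #s * (c * M * p) := by gcongr; exact filter_subset _ _
  have hsplit := sum_filter_add_sum_filter_not s (fun i => c * M * p ≤ X i) X
  nlinarith

theorem mul_card_le_card_filter_of_forall_le_card_filter {ι κ : Type*} {s : Finset ι}
    {t : Finset κ} (r : ι → κ → Prop) [∀ a b, Decidable (r a b)] {p c : ℝ} (hc : 0 ≤ c)
    (hp₀ : 0 ≤ p) (hp₁ : p ≤ 1) (h : ∀ b ∈ t, p * #s ≤ #{a ∈ s | r a b}) :
    (1 - c) * p * #s ≤ #{a ∈ s | c * #t * p ≤ #{b ∈ t | r a b}} := by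
  rcases t.eq_empty_or_nonempty with rfl | ht
  · simp only [filter_empty, card_empty, CharP.cast_eq_zero, mul_zero, zero_mul, le_refl,
      filter_true]
    have hcp : (1 - c) * p ≤ 1 := by nlinarith
    nlinarith [(#s).cast_nonneg (α := ℝ)]
  refine mul_card_le_card_filter_of_le_sum (by exact_mod_cast ht.card_pos) hc hp₀
    (fun a _ => by exact_mod_cast card_filter_le t _) ?_
  calc p * #t * #s = ∑ b ∈ t, p * #s := by rw [sum_const, nsmul_eq_mul]; ring
    _ ≤ ∑ b ∈ t, (#{a ∈ s | r a b} : ℝ) := sum_le_sum h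
    _ = ∑ a ∈ s, (#{b ∈ t | r a b} : ℝ) := by
        exact_mod_cast (sum_card_bipartiteAbove_eq_sum_card_bipartiteBelow r).symm

theorem forall_card_filter_le_one_iff_injective {α β : Type*} [DecidableEq β] (f : α → β)
    (C : Finset α) :
    (∀ b, #{a ∈ C | f a = b} ≤ 1) ↔ Injective (f ∘ Subtype.val : C → β) := by
  simp only [card_le_one, mem_filter, Injective, comp_apply, Subtype.forall, Subtype.mk.injEq]
  exact ⟨fun h a ha a' ha' e => h _ a ⟨ha, e⟩ a' ⟨ha', rfl⟩,
    fun h b a ⟨ha, e⟩ a' ⟨ha', e'⟩ => h a ha a' ha' (e.trans e'.symm)⟩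

/-- For a polynomial `P` consisting of `μ = 𝒞.card` distinct multilinear monomials of degree
at most `T` (monomials indexed by their variable sets `C ∈ 𝒞`), a uniformly random
equipartition of `[m]` into `T` parts (encoded as a function `f : Fin m → Fin T` with all
fibers of size `m/T`) shatters at least `0.5·μ·e^{-T}` of the monomials with probability at
least `e^{-2T}`. -/
theorem stmt_9 (m T : ℕ) (hT : 1 ≤ T) (hdvd : T ∣ m)
    (𝒞 : Finset (Finset (Fin m))) (hdeg : ∀ C ∈ 𝒞, C.card ≤ T) :
    let Part : Finset (Fin m → Fin T) := Finset.univ.filter (fun f =>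
      ∀ j, (Finset.univ.filter (fun x => f x = j)).card = m / T)
    ((Part.filter (fun f =>
        (0.5 : ℝ) * 𝒞.card * Real.exp (-(T : ℝ)) ≤
          ((𝒞.filter (fun C => ∀ j, (C.filter (fun x => f x = j)).card ≤ 1)).card : ℝ))).card : ℝ)
      / Part.card ≥ Real.exp (-2 * (T : ℝ)) := by
  intro Part
  obtain ⟨s, rfl⟩ := hdvd
  have hPart : Part = equipartitions (Fin (T * s)) (Fin T) s := by
    ext f
    simp [Part, equipartitions, Nat.mul_div_cancel_left s hT]
  have hne : 0 < #Part := hPart ▸ (equipartitions_nonempty (by simp)).card_pos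
  have hshatter : ∀ C ∈ 𝒞, Real.exp (-T) * #Part
      ≤ #{f ∈ Part | ∀ j, (C.filter (fun x => f x = j)).card ≤ 1} := by
    intro C hC
    simp_rw [forall_card_filter_le_one_iff_injective, hPart]
    simpa using exp_neg_mul_card_equipartitions_le (β := Fin T) (s := s)
      Subtype.val_injective (by simpa using hdeg C hC) (by simp)
  have hexp : Real.exp (-2 * T) ≤ (1 - 0.5) * Real.exp (-T) := by
    have h₁ : Real.exp (-T) ≤ Real.exp (-1) := Real.exp_le_exp.2 (by simpa using hT)
    rw [show (-2 * T : ℝ) = -T + -T by ring, Real.exp_add]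
    nlinarith [Real.exp_neg_one_lt_half, Real.exp_pos (-T)]
  rw [ge_iff_le, le_div_iff₀ (by exact_mod_cast hne)]
  exact (mul_le_mul_of_nonneg_right hexp (by positivity)).trans
    (mul_card_le_card_filter_of_forall_le_card_filter _ (by norm_num) (Real.exp_pos _).le
      (Real.exp_le_one_iff.2 (by simp)) hshatter)
end
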